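/- For x, y, z ∈ ℝⁿ, the triple [x,y,z] is F-right-angled in z, i.e. the 4n-ary value ⊞ applied to the tuple (x₁y₁,…,xₙyₙ, −x₁z₁,…,−xₙzₙ, −y₁z₁,…,−yₙzₙ, z₁²,…,zₙ²) equals 0, if and only if for every natural number p, Σ_{i∈[n]} (x_i^{2p+1} − z_i^{2p+1})(y_i^{2p+1} − z_i^{2p+1}) = 0. -/

import Mathlib

open Filter Finset

/-- The binary idempotent operation `⊞`. -/
noncomputable def bop (a b : ℝ) : ℝ :=
  if |b| < |a| then a else if |a| < |b| then b else (a + b) / 2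

/-- The unique real `(2p+1)`-th root of `t`. -/
noncomputable def oddRoot (p : ℕ) (t : ℝ) : ℝ :=
  Real.sign t * |t| ^ ((1 : ℝ) / (2 * (p : ℝ) + 1))

/-- `ξ_I[u](α) = Card{i ∈ I : u i = α} − Card{i ∈ I : u i = −α}`. -/
noncomputable def xiMap {ι : Type*} (I : Finset ι) (u : ι → ℝ) (α : ℝ) : ℤ :=
  ((I.filter fun i => u i = α).card : ℤ) - ((I.filter fun i => u i = -α).card : ℤ)

/-- The residual index set `J_I(u)`. -/
noncomputable def resid {ι : Type*} (I : Finset ι) (u : ι → ℝ) : Finset ι :=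
  I.filter fun i => xiMap I u (u i) ≠ 0

/-- The `n`-ary extension `⊞_{i ∈ I} u i` of the binary operation `⊞`. -/
noncomputable def Fop {ι : Type*} (I : Finset ι) (u : ι → ℝ) : ℝ :=
  if h : (resid I u).Nonempty then
    if 0 < xiMap I u ((resid I u).sup' h fun i => |u i|) then (resid I u).sup' h u
    else if xiMap I u ((resid I u).sup' h fun i => |u i|) < 0 then (resid I u).inf' h u
    else 0
  else 0

/-- The Chebyshev norm `max_{i ∈ [n]} |x i|`. -/
noncomputable def chebNorm {n : ℕ} (x : Fin n → ℝ) : ℝ := ⨆ i, |x i|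

/-- The ultrametric distance `d_⊞(x,y) = max_i |x_i ⊟ y_i|`. -/
noncomputable def dB {n : ℕ} (x y : Fin n → ℝ) : ℝ := ⨆ i, |bop (x i) (-(y i))|

/-- The 4n-ary value `⟨⟨x,y,z⟩⟩_∞` used for F-right angles. -/
noncomputable def rightAngleVal {n : ℕ} (x y z : Fin n → ℝ) : ℝ :=
  Fop (Finset.univ : Finset ((Fin n ⊕ Fin n) ⊕ (Fin n ⊕ Fin n)))
    (Sum.elim (Sum.elim (fun i => x i * y i) (fun i => -(x i * z i)))
              (Sum.elim (fun i => -(y i * z i)) (fun i => z i ^ 2)))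

/-!
Both conditions say that the multiset of the `4n` numbers `xᵢyᵢ, −xᵢzᵢ, −yᵢzᵢ, zᵢ²`
is symmetric under `t ↦ −t`, i.e. that `ξ` vanishes identically. For `⊞` this holds because a
nonempty residual set makes `⊞` return a value of absolute value `max_J |uᵢ| > 0`. For the power
sums, `(xᵢ^k − zᵢ^k)(yᵢ^k − zᵢ^k)` expands into the `k`-th powers of those four numbers, and the odd
power sums of a tuple are `∑_{a ≥ 0} ξ(a) a · (a²)^p`; a Vandermonde argument in the distinct
nodes `a²` shows that they all vanish only when every `ξ(a)` does.
-/

theorem Finset.eq_zero_of_forall_sum_mul_pow_eq_zero {ι R : Type*} [CommRing R] [IsDomain R]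
    {s : Finset ι} {f d : ι → R} (hf : Set.InjOn f s)
    (h : ∀ k : ℕ, ∑ i ∈ s, d i * f i ^ k = 0) : ∀ i ∈ s, d i = 0 := by
  intro i hi
  set e := s.equivFin
  have hv := Matrix.eq_zero_of_forall_pow_sum_mul_pow_eq_zero
    (f := fun j => f (e.symm j)) (v := fun j => d (e.symm j))
    (fun j j' hjj' => e.symm.injective (Subtype.ext (hf (e.symm j).2 (e.symm j').2 hjj')))
    (fun k => by
      rw [← h k, ← Finset.sum_coe_sort s]; exact e.symm.sum_comp fun i => d i * f i ^ (k : ℕ))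
  simpa using congrFun hv (e ⟨i, hi⟩)

section Balanced

variable {ι : Type*} (I : Finset ι) (u : ι → ℝ)

theorem xiMap_neg (α : ℝ) : xiMap I u (-α) = -xiMap I u α := by
  rw [xiMap, xiMap, neg_neg, neg_sub]

theorem xiMap_zero : xiMap I u 0 = 0 := by
  simp [xiMap]

theorem xiMap_abs_eq_zero_iff (α : ℝ) : xiMap I u |α| = 0 ↔ xiMap I u α = 0 := by
  rcases abs_choice α with h | h <;> simp [h, xiMap_neg]

theorem resid_eq_empty_iff : resid I u = ∅ ↔ ∀ α, xiMap I u α = 0 := by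
  refine ⟨fun h α => ?_, fun h => by simp [resid, h]⟩
  have hres : ∀ i ∈ I, xiMap I u (u i) = 0 := by simpa [resid] using h
  by_cases hα : ∃ i ∈ I, u i = α
  · obtain ⟨i, hi, rfl⟩ := hα
    exact hres i hi
  by_cases hα' : ∃ i ∈ I, u i = -α
  · obtain ⟨i, hi, hui⟩ := hα'
    simpa [hui, xiMap_neg] using hres i hi
  push Not at hα hα'
  simp [xiMap, Finset.filter_eq_empty_iff.mpr hα, Finset.filter_eq_empty_iff.mpr hα']

theorem Fop_ne_zero_of_resid_nonempty (h : (resid I u).Nonempty) : Fop I u ≠ 0 := by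
  obtain ⟨i₀, hi₀, hM⟩ := Finset.exists_mem_eq_sup' h fun i => |u i|
  set M := (resid I u).sup' h fun i => |u i|
  have hxi₀ : xiMap I u (u i₀) ≠ 0 := (Finset.mem_filter.mp hi₀).2
  have hxiM : xiMap I u M ≠ 0 := by rwa [hM, Ne, xiMap_abs_eq_zero_iff]
  have hMpos : 0 < M := by
    rw [hM, abs_pos]
    intro hz
    exact hxi₀ (hz ▸ xiMap_zero I u)
  have mem_resid : ∀ j ∈ I, |u j| = M → j ∈ resid I u := fun j hj hjM =>
    Finset.mem_filter.mpr ⟨hj, by rwa [← hjM, Ne, xiMap_abs_eq_zero_iff] at hxiM⟩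
  rw [Fop, dif_pos h]
  rcases hxiM.lt_or_gt with hlt | hgt
  · rw [if_neg hlt.not_gt, if_pos hlt]
    obtain ⟨j, hj⟩ : (I.filter fun i => u i = -M).Nonempty := by
      rw [← Finset.card_pos]; unfold xiMap at hlt; omega
    obtain ⟨hjI, hjM⟩ := Finset.mem_filter.mp hj
    have hle := Finset.inf'_le u (mem_resid j hjI (by rw [hjM, abs_neg, abs_of_pos hMpos]))
    linarith
  · rw [if_pos hgt]
    obtain ⟨j, hj⟩ : (I.filter fun i => u i = M).Nonempty := by
      rw [← Finset.card_pos]; unfold xiMap at hgt; omega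
    obtain ⟨hjI, hjM⟩ := Finset.mem_filter.mp hj
    have hle := Finset.le_sup' u (mem_resid j hjI (by rw [hjM, abs_of_pos hMpos]))
    linarith

theorem Fop_eq_zero_iff : Fop I u = 0 ↔ ∀ α, xiMap I u α = 0 := by
  rw [← resid_eq_empty_iff]
  refine ⟨fun h => ?_, fun h => by simp [Fop, h]⟩
  exact Finset.not_nonempty_iff_eq_empty.mp fun hne => Fop_ne_zero_of_resid_nonempty I u hne h

theorem sum_filter_abs_eq_xiMap_mul_pow {a : ℝ} (ha : 0 ≤ a) {k : ℕ} (hk : Odd k) :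
    ∑ i ∈ I with |u i| = a, u i ^ k = xiMap I u a * a ^ k := by
  classical
  rcases ha.eq_or_lt with rfl | ha
  · rw [xiMap_zero, Int.cast_zero, zero_mul]
    refine Finset.sum_eq_zero fun i hi => ?_
    rw [abs_eq_zero.mp (Finset.mem_filter.mp hi).2, zero_pow hk.pos.ne']
  have hdisj : Disjoint (I.filter fun i => u i = a) (I.filter fun i => u i = -a) :=
    Finset.disjoint_filter.mpr fun i _ h₁ h₂ => by linarith
  have hfiber : (I.filter fun i => |u i| = a)
      = (I.filter fun i => u i = a) ∪ (I.filter fun i => u i = -a) := by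
    ext i; simp [abs_eq ha.le, and_or_left]
  rw [hfiber, Finset.sum_union hdisj, Finset.sum_eq_card_nsmul fun i hi => by rw [(Finset.mem_filter.mp hi).2],
    Finset.sum_eq_card_nsmul fun i hi => by rw [(Finset.mem_filter.mp hi).2]]
  simp only [nsmul_eq_mul, hk.neg_pow, xiMap]
  push_cast
  ring

theorem sum_pow_eq_sum_xiMap_mul_pow {k : ℕ} (hk : Odd k) :
    ∑ i ∈ I, u i ^ k = ∑ a ∈ I.image fun i => |u i|, xiMap I u a * a ^ k := by
  rw [← Finset.sum_fiberwise_of_maps_to fun i hi => Finset.mem_image_of_mem (fun i => |u i|) hi]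
  refine Finset.sum_congr rfl fun a ha => ?_
  obtain ⟨i, -, rfl⟩ := Finset.mem_image.mp ha
  exact sum_filter_abs_eq_xiMap_mul_pow I u (abs_nonneg _) hk

theorem forall_xiMap_eq_zero_iff_sum_odd_pow_eq_zero :
    (∀ α, xiMap I u α = 0) ↔ ∀ p : ℕ, ∑ i ∈ I, u i ^ (2 * p + 1) = 0 := by
  simp_rw [sum_pow_eq_sum_xiMap_mul_pow I u (odd_two_mul_add_one _)]
  refine ⟨fun h p => by simp [h], fun h => ?_⟩
  have hvdm := Finset.eq_zero_of_forall_sum_mul_pow_eq_zero (s := I.image fun i => |u i|)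
    (f := fun a => a ^ 2) (d := fun a => xiMap I u a * a)
    (fun a ha b hb hab => by
      obtain ⟨i, -, rfl⟩ := Finset.mem_image.mp ha
      obtain ⟨j, -, rfl⟩ := Finset.mem_image.mp hb
      exact (sq_eq_sq₀ (abs_nonneg _) (abs_nonneg _)).mp hab)
    (fun p => by rw [← h p]; exact Finset.sum_congr rfl fun a _ => by ring)
  rw [← resid_eq_empty_iff, resid, Finset.filter_eq_empty_iff]
  intro i hi
  rw [not_not, ← xiMap_abs_eq_zero_iff]
  rcases mul_eq_zero.mp (hvdm _ (Finset.mem_image_of_mem _ hi)) with h0 | h0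
  · exact_mod_cast h0
  · rw [h0, xiMap_zero]

end Balanced

noncomputable def rightAngleTuple {n : ℕ} (x y z : Fin n → ℝ) :
    (Fin n ⊕ Fin n) ⊕ (Fin n ⊕ Fin n) → ℝ :=
  Sum.elim (Sum.elim (fun i => x i * y i) (fun i => -(x i * z i)))
    (Sum.elim (fun i => -(y i * z i)) (fun i => z i ^ 2))

theorem rightAngleVal_eq_Fop {n : ℕ} (x y z : Fin n → ℝ) :
    rightAngleVal x y z = Fop Finset.univ (rightAngleTuple x y z) :=
  rfl

theorem sum_rightAngleTuple_pow {n : ℕ} (x y z : Fin n → ℝ) {k : ℕ} (hk : Odd k) :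
    ∑ j, rightAngleTuple x y z j ^ k = ∑ i, (x i ^ k - z i ^ k) * (y i ^ k - z i ^ k) := by
  simp only [Fintype.sum_sum_type, rightAngleTuple, Sum.elim_inl, Sum.elim_inr,
    ← Finset.sum_add_distrib, hk.neg_pow]
  exact Finset.sum_congr rfl fun i _ => by ring

/-- `[x,y,z]` is F-right-angled in `z` iff it is `φ_p`-right-angled
in `z` for every `p`. -/
theorem stmt13 (n : ℕ) (x y z : Fin n → ℝ) :
    rightAngleVal x y z = 0 ↔
      ∀ p : ℕ, ∑ i, (x i ^ (2 * p + 1) - z i ^ (2 * p + 1))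
          * (y i ^ (2 * p + 1) - z i ^ (2 * p + 1)) = 0 := by
  simp_rw [rightAngleVal_eq_Fop, Fop_eq_zero_iff, forall_xiMap_eq_zero_iff_sum_odd_pow_eq_zero,
    sum_rightAngleTuple_pow x y z (odd_two_mul_add_one _)]
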